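/- For every real inner product space and every family of vectors (V_w), and at every grade n: ⟨|S|, |S|⟩ = ⟨S, S⟩ = ⟨id, id⟩, where S is the antipode, |S| the reversal endomorphism, id the identity endomorphism, and the inner product is taken over the words of length n. -/

import Mathlib

open Finsupp

/-- Words over the alphabet `A = {0,1,…,d}`. -/
abbrev Word (d : ℕ) : Type := List (Fin (d+1))

/-- The free real vector space with basis the set of all words. -/
abbrev KA (d : ℕ) : Type := Word d →₀ ℝ

/-- Shuffle product of two words, as an element of `KA d`. -/
noncomputable def shuffleWord (d : ℕ) : Word d → Word d → KA d
  | [], v => Finsupp.single v 1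
  | a :: u, [] => Finsupp.single (a :: u) 1
  | a :: u, b :: v =>
      Finsupp.mapDomain (List.cons a) (shuffleWord d u (b :: v)) +
      Finsupp.mapDomain (List.cons b) (shuffleWord d (a :: u) v)
  termination_by u v => u.length + v.length

/-- Bilinear extension of the shuffle product to `KA d`. -/
noncomputable def sh (d : ℕ) (x y : KA d) : KA d :=
  x.sum fun u cu => y.sum fun v cv => (cu * cv) • shuffleWord d u v

/-- Admissible words: concatenations of blocks each of which is the single
letter `0` or a pair `aa` with `a ≠ 0`. -/
inductive Admissible (d : ℕ) : Word d → Prop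
  | nil : Admissible d []
  | zero {w : Word d} : Admissible d w → Admissible d (0 :: w)
  | pair {w : Word d} (a : Fin (d+1)) : a ≠ 0 → Admissible d w →
      Admissible d (a :: a :: w)

/-- Number of `0` letters. -/
def zc (d : ℕ) (w : Word d) : ℕ := w.count 0

/-- Half the number of nonzero letters. -/
def dc (d : ℕ) (w : Word d) : ℕ := (w.length - w.count 0) / 2

def nc (d : ℕ) (w : Word d) : ℕ := zc d w + dc d w

open Classical in
/-- The expectation map on words. -/
noncomputable def Ebar (d : ℕ) (t : ℝ) (w : Word d) : ℝ :=
  if Admissible d w then t ^ nc d w / (2 ^ dc d w * Nat.factorial (nc d w)) else 0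

/-- Linear extension of the expectation map to `KA d`. -/
noncomputable def EbarL (d : ℕ) (t : ℝ) (x : KA d) : ℝ :=
  x.sum fun w c => c * Ebar d t w

/-- The linear endomorphism of `KA d` determined by values on basis words. -/
noncomputable def wordLift (d : ℕ) (f : Word d → KA d) : KA d →ₗ[ℝ] KA d :=
  Finsupp.lsum ℝ fun w => LinearMap.toSpanSingleton ℝ (KA d) (f w)

/-- The identity endomorphism `id`. -/
noncomputable def idE (d : ℕ) : KA d →ₗ[ℝ] KA d := LinearMap.id

/-- The reversal endomorphism `|S|`. -/
noncomputable def revE (d : ℕ) : KA d →ₗ[ℝ] KA d :=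
  wordLift d fun w => Finsupp.single w.reverse 1

/-- The antipode `S`. -/
noncomputable def Sa (d : ℕ) : KA d →ₗ[ℝ] KA d :=
  wordLift d fun w => Finsupp.single w.reverse ((-1 : ℝ) ^ w.length)

/-- The convolution unit `ν`. -/
noncomputable def nuE (d : ℕ) : KA d →ₗ[ℝ] KA d :=
  wordLift d fun w => if w = [] then Finsupp.single ([] : Word d) 1 else 0

/-- The expectation endomorphism `E`. -/
noncomputable def EE (d : ℕ) (t : ℝ) : KA d →ₗ[ℝ] KA d :=
  wordLift d fun w => Finsupp.single ([] : Word d) (Ebar d t w)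

/-- The convolution product `X ⋆ Y`. -/
noncomputable def conv (d : ℕ) (X Y : KA d →ₗ[ℝ] KA d) : KA d →ₗ[ℝ] KA d :=
  wordLift d fun w => ∑ k ∈ Finset.range (w.length + 1),
    sh d (X (Finsupp.single (w.take k) 1)) (Y (Finsupp.single (w.drop k) 1))

/-- Convolution powers, `X^{⋆0} = ν`. -/
noncomputable def convPow (d : ℕ) (X : KA d →ₗ[ℝ] KA d) : ℕ → (KA d →ₗ[ℝ] KA d)
  | 0 => nuE d
  | k + 1 => conv d X (convPow d X k)

/-- The inner product `⟨X,Y⟩` of endomorphisms, taken over the words of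
length `n`, relative to the family of vectors `Vf`. -/
noncomputable def ip (d : ℕ) (t : ℝ) {H : Type*} [NormedAddCommGroup H]
    [InnerProductSpace ℝ H] (Vf : Word d → H) (n : ℕ)
    (X Y : KA d →ₗ[ℝ] KA d) : ℝ :=
  ∑ u : Fin n → Fin (d+1), ∑ v : Fin n → Fin (d+1),
    EbarL d t (sh d (X (Finsupp.single (List.ofFn u) 1))
                    (Y (Finsupp.single (List.ofFn v) 1))) *
      (inner ℝ (Vf (List.ofFn u)) (Vf (List.ofFn v)) : ℝ)

/-- Positive semidefiniteness of the expectation Gram matrix at grade `n`: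
indexed by the words of length `n` together with the empty word. -/
def gramPSD (d n : ℕ) (t : ℝ) : Prop :=
  ∀ c : Option (Fin n → Fin (d+1)) → ℝ,
    0 ≤ ∑ x : Option (Fin n → Fin (d+1)), ∑ y : Option (Fin n → Fin (d+1)),
      c x * c y *
        EbarL d t (shuffleWord d (x.elim ([] : Word d) List.ofFn)
                                 (y.elim ([] : Word d) List.ofFn))

/-!
Reversing words commutes with the shuffle product and preserves admissibility together with the
letter counts, so `Ē` is invariant under reversal. Hence `Ē(S u ⧢ S v) = Ē(|S| u ⧢ |S| v)` because
the signs `(-1)^n` of the two factors cancel, and `Ē(|S| u ⧢ |S| v) = Ē(u ⧢ v)`.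
-/

open Finsupp

section Shuffle

variable {d : ℕ}

@[simp]
lemma shuffleWord_nil_left (v : Word d) : shuffleWord d [] v = single v 1 := by
  rw [shuffleWord]

@[simp]
lemma shuffleWord_nil_right (u : Word d) : shuffleWord d u [] = single u 1 := by
  cases u <;> rw [shuffleWord]

lemma shuffleWord_cons_cons (a b : Fin (d + 1)) (u v : Word d) :
    shuffleWord d (a :: u) (b :: v) =
      mapDomain (List.cons a) (shuffleWord d u (b :: v)) +
        mapDomain (List.cons b) (shuffleWord d (a :: u) v) := by
  rw [shuffleWord]

lemma mapDomain_cons_mapDomain_append (c : Fin (d + 1)) (w : Word d) (x : KA d) :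
    mapDomain (List.cons c) (mapDomain (· ++ w) x) =
      mapDomain (· ++ w) (mapDomain (List.cons c) x) := by
  rw [← mapDomain_comp, ← mapDomain_comp]
  rfl

lemma shuffleWord_append_singleton (a b : Fin (d + 1)) (u v : Word d) :
    shuffleWord d (u ++ [a]) (v ++ [b]) =
      mapDomain (· ++ [a]) (shuffleWord d u (v ++ [b])) +
        mapDomain (· ++ [b]) (shuffleWord d (u ++ [a]) v) := by
  induction u generalizing v with
  | nil =>
    induction v with
    | nil =>
      simp only [List.nil_append, shuffleWord_cons_cons, shuffleWord_nil_left,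
        shuffleWord_nil_right, mapDomain_single, List.singleton_append]
      exact add_comm _ _
    | cons q v ihv =>
      simp only [List.nil_append, List.cons_append] at ihv ⊢
      rw [shuffleWord_cons_cons, ihv, shuffleWord_cons_cons]
      simp only [shuffleWord_nil_left, mapDomain_add, mapDomain_single,
        mapDomain_cons_mapDomain_append, List.cons_append]
      abel
  | cons p u ihu =>
    induction v with
    | nil =>
      have := ihu []
      simp only [List.nil_append] at this ⊢
      rw [List.cons_append, shuffleWord_cons_cons, this, shuffleWord_cons_cons]
      simp only [shuffleWord_nil_right, mapDomain_add, mapDomain_single,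
        mapDomain_cons_mapDomain_append, List.cons_append]
      abel
    | cons q v ihv =>
      have ihu := ihu (q :: v)
      simp only [List.cons_append] at ihu ihv ⊢
      rw [shuffleWord_cons_cons, ihu, ihv, shuffleWord_cons_cons, shuffleWord_cons_cons]
      simp only [mapDomain_add, mapDomain_cons_mapDomain_append]
      abel

lemma mapDomain_reverse_mapDomain_cons (c : Fin (d + 1)) (x : KA d) :
    mapDomain List.reverse (mapDomain (List.cons c) x) =
      mapDomain (· ++ [c]) (mapDomain List.reverse x) := by
  rw [← mapDomain_comp, ← mapDomain_comp]
  congr 1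
  exact funext fun _ => List.reverse_cons

lemma mapDomain_reverse_shuffleWord (u v : Word d) :
    mapDomain List.reverse (shuffleWord d u v) = shuffleWord d u.reverse v.reverse := by
  induction u, v using shuffleWord.induct d with
  | case1 v => simp
  | case2 a u => simp
  | case3 a u b v ihu ihv =>
    rw [shuffleWord_cons_cons, mapDomain_add, mapDomain_reverse_mapDomain_cons,
      mapDomain_reverse_mapDomain_cons, ihu, ihv, List.reverse_cons, List.reverse_cons,
      shuffleWord_append_singleton]

end Shuffle

namespace Admissible

variable {d : ℕ}

lemma append {u v : Word d} (hu : Admissible d u) (hv : Admissible d v) :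
    Admissible d (u ++ v) := by
  induction hu with
  | nil => exact hv
  | zero _ ih => exact zero ih
  | pair a ha _ ih => exact pair a ha ih

lemma reverse {w : Word d} (h : Admissible d w) : Admissible d w.reverse := by
  induction h with
  | nil => exact nil
  | zero _ ih => exact (List.reverse_cons ▸ ih.append (zero nil))
  | pair a ha _ ih =>
    rw [List.reverse_cons, List.reverse_cons, List.append_assoc]
    exact ih.append (pair a ha nil)

end Admissible

lemma admissible_reverse_iff {d : ℕ} {w : Word d} : Admissible d w.reverse ↔ Admissible d w :=
  ⟨fun h => w.reverse_reverse ▸ h.reverse, Admissible.reverse⟩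

section Expectation

variable {d : ℕ} {t : ℝ}

open Classical in
lemma Ebar_reverse (w : Word d) : Ebar d t w.reverse = Ebar d t w := by
  simp only [Ebar, nc, zc, dc, List.count_reverse, List.length_reverse, admissible_reverse_iff]

lemma EbarL_smul (c : ℝ) (x : KA d) : EbarL d t (c • x) = c * EbarL d t x := by
  rw [EbarL, EbarL, sum_smul_index' (fun _ => zero_mul _), mul_sum]
  simp only [smul_eq_mul, mul_assoc]

lemma EbarL_mapDomain_reverse (x : KA d) :
    EbarL d t (mapDomain List.reverse x) = EbarL d t x := by
  rw [EbarL, sum_mapDomain_index (fun _ => zero_mul _) (fun _ _ _ => add_mul _ _ _)]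
  simp only [Ebar_reverse, EbarL]

lemma EbarL_shuffleWord_reverse (u v : Word d) :
    EbarL d t (shuffleWord d u.reverse v.reverse) = EbarL d t (shuffleWord d u v) := by
  rw [← mapDomain_reverse_shuffleWord, EbarL_mapDomain_reverse]

end Expectation

section Endomorphisms

variable {d : ℕ}

lemma sh_single_single (u v : Word d) (c c' : ℝ) :
    sh d (single u c) (single v c') = (c * c') • shuffleWord d u v := by
  simp [sh, sum_single_index]

lemma wordLift_single_one (f : Word d → KA d) (w : Word d) :
    wordLift d f (single w 1) = f w := by
  simp [wordLift]

lemma revE_single_one (w : Word d) : revE d (single w 1) = single w.reverse 1 :=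
  wordLift_single_one _ w

lemma Sa_single_one (w : Word d) : Sa d (single w 1) = single w.reverse ((-1 : ℝ) ^ w.length) :=
  wordLift_single_one _ w

end Endomorphisms

theorem stmt_10_general (d n : ℕ) (t : ℝ)
    {H : Type*} [NormedAddCommGroup H] [InnerProductSpace ℝ H]
    (Vf : Word d → H) :
    ip d t Vf n (revE d) (revE d) = ip d t Vf n (Sa d) (Sa d) ∧
    ip d t Vf n (Sa d) (Sa d) = ip d t Vf n (idE d) (idE d) := by
  have sign_cancel : ((-1 : ℝ) ^ n * (-1) ^ n) = 1 := by rw [← mul_pow]; norm_num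
  constructor <;>
  refine Finset.sum_congr rfl fun u _ => Finset.sum_congr rfl fun v _ => ?_ <;>
  simp only [revE_single_one, Sa_single_one, idE, LinearMap.id_apply, sh_single_single,
    EbarL_smul, List.length_ofFn, sign_cancel, one_mul, EbarL_shuffleWord_reverse]

theorem stmt_10 (d n : ℕ) (hd : 1 ≤ d) (hn : 1 ≤ n) (t : ℝ) (ht : 0 < t)
    {H : Type*} [NormedAddCommGroup H] [InnerProductSpace ℝ H]
    (Vf : Word d → H) :
    ip d t Vf n (revE d) (revE d) = ip d t Vf n (Sa d) (Sa d) ∧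
    ip d t Vf n (Sa d) (Sa d) = ip d t Vf n (idE d) (idE d) :=
  stmt_10_general d n t Vf
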